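/- Let g: D_{r₀} → ℝ with g(0,0) = 0, g ∈ C^{1,α} on each annulus D̄_r \ D_{r/2} (0 < r ≤ r₀) with C^{1,α}-norms of the rescalings g_r(x,y) := g(rx,ry)/r uniformly bounded, and suppose g_r → G in C(D̄₁ \ D_{1/2}) as r → 0, where G(x,y) = √(x²+y²)/√2. Then g is Lipschitz on D_{r₀}, g_r → G in C^{1,β}(D̄₁ \ D_{1/2}) for every β < α, and ∇g(x,y) − ∇G(x,y) → 0 as (x,y) → (0,0); in particular g − G is C¹ at the origin with vanishing gradient difference. -/

import Mathlib

/-!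
Put `f_r = g_r - G` on the annulus. The uniform `C^{1,α}` bound makes `∇f_r` uniformly
`α`-Hölder, so if `|f_r| ≤ δ` then the mean value inequality on a ball of radius `h` inside the
annulus gives `|∇f_r| ≲ δ / h + h^α`; choosing `h` and then `δ` small shows `∇g_r → ∇G`
uniformly, and interpolating this sup bound with the `α`-Hölder bound gives the `C^{1,β}`
convergence. Since `∇g_r(x) = ∇g(r x)` and `∇G` is `0`-homogeneous, `∇g(x) - ∇G(x)` is the
gradient difference of `g_{|x|}` at the point `x / |x|` of the annulus. Finally
`|g(x)| ≤ L |x|` and `|∇g| ≤ L` off the origin make `g` Lipschitz: a segment through the origin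
has length `|x| + |y|`.
-/

open Metric

noncomputable section

abbrev E2 := EuclideanSpace ℝ (Fin 2)

/-- The limit cone profile `G(x,y) = √(x²+y²)/√2`. -/
def Gfun (v : E2) : ℝ := Real.sqrt ((v 0) ^ 2 + (v 1) ^ 2) / Real.sqrt 2

/-- The closed annulus `D̄₁ \ D_{1/2}`. -/
def Ann : Set E2 := closedBall (0 : E2) 1 \ ball (0 : E2) (1/2)

/-- The rescaling `g_r(x) = g(rx)/r`. -/
def resc (g : E2 → ℝ) (r : ℝ) : E2 → ℝ := fun x => g (r • x) / r

open Filter Topology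

section Normalize

variable {E : Type*} [NormedAddCommGroup E] [NormedSpace ℝ E]

lemma norm_inv_norm_smul {x : E} (hx : x ≠ 0) : ‖‖x‖⁻¹ • x‖ = 1 := by
  rw [norm_smul, norm_inv, norm_norm, inv_mul_cancel₀ (norm_ne_zero_iff.2 hx)]

lemma inv_norm_smul_smul_of_pos {c : ℝ} (hc : 0 < c) (x : E) :
    ‖c • x‖⁻¹ • (c • x) = ‖x‖⁻¹ • x := by
  rw [norm_smul, Real.norm_of_nonneg hc.le, smul_smul]
  congr 1
  field_simp

lemma norm_inv_norm_smul_sub_le {x y : E} (hx : x ≠ 0) (hy : y ≠ 0) :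
    ‖‖x‖⁻¹ • x - ‖y‖⁻¹ • y‖ ≤ 2 * ‖x - y‖ / ‖x‖ := by
  have hx' : 0 < ‖x‖ := norm_pos_iff.2 hx
  have hy' : 0 < ‖y‖ := norm_pos_iff.2 hy
  have hcoeff : ‖x‖⁻¹ * (‖y‖ - ‖x‖) * ‖y‖⁻¹ = ‖x‖⁻¹ - ‖y‖⁻¹ := by
    field_simp
  have hsplit : ‖x‖⁻¹ • x - ‖y‖⁻¹ • y = ‖x‖⁻¹ • ((x - y) + (‖y‖ - ‖x‖) • (‖y‖⁻¹ • y)) := by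
    rw [smul_add, smul_smul, smul_smul, hcoeff, sub_smul, smul_sub]
    abel
  rw [hsplit, norm_smul, Real.norm_of_nonneg (inv_nonneg.2 hx'.le), inv_mul_eq_div]
  gcongr
  calc ‖(x - y) + (‖y‖ - ‖x‖) • (‖y‖⁻¹ • y)‖
      ≤ ‖x - y‖ + |‖y‖ - ‖x‖| := by
        refine (norm_add_le _ _).trans_eq ?_
        rw [norm_smul, norm_inv_norm_smul hy, mul_one, Real.norm_eq_abs]
    _ ≤ 2 * ‖x - y‖ := by
        linarith [abs_norm_sub_norm_le y x, norm_sub_rev y x]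

end Normalize

lemma hasFDerivAt_norm_of_ne_zero {F : Type*} [NormedAddCommGroup F] [InnerProductSpace ℝ F]
    {x : F} (hx : x ≠ 0) : HasFDerivAt (‖·‖) (innerSL ℝ (‖x‖⁻¹ • x)) x := by
  have hx' : 0 < ‖x‖ := norm_pos_iff.2 hx
  have := (hasStrictFDerivAt_norm_sq x).hasFDerivAt.sqrt (pow_ne_zero 2 hx'.ne')
  simp only [Real.sqrt_sq (norm_nonneg _)] at this
  refine this.congr_fderiv ?_
  ext v
  simp only [one_div, mul_inv_rev, smul_apply, coe_innerSL_apply,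
    nsmul_eq_mul, Nat.cast_ofNat, smul_eq_mul, map_smul]
  field_simp

lemma Gfun_eq_norm_div (v : E2) : Gfun v = ‖v‖ / √2 := by
  rw [Gfun, EuclideanSpace.norm_eq, Fin.sum_univ_two, Real.norm_eq_abs, Real.norm_eq_abs,
    sq_abs, sq_abs]

lemma hasFDerivAt_Gfun {x : E2} (hx : x ≠ 0) :
    HasFDerivAt Gfun ((√2)⁻¹ • innerSL ℝ (‖x‖⁻¹ • x)) x := by
  have hG : Gfun = fun v => ‖v‖ / √2 := funext Gfun_eq_norm_div
  rw [hG]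
  simpa only [div_eq_mul_inv, mul_comm _ (√2)⁻¹, smul_eq_mul] using
    (hasFDerivAt_norm_of_ne_zero hx).const_mul (√2)⁻¹

lemma fderiv_Gfun {x : E2} (hx : x ≠ 0) :
    fderiv ℝ Gfun x = (√2)⁻¹ • innerSL ℝ (‖x‖⁻¹ • x) :=
  (hasFDerivAt_Gfun hx).fderiv

lemma fderiv_Gfun_smul {c : ℝ} (hc : 0 < c) {x : E2} (hx : x ≠ 0) :
    fderiv ℝ Gfun (c • x) = fderiv ℝ Gfun x := by
  rw [fderiv_Gfun (smul_ne_zero hc.ne' hx), fderiv_Gfun hx, inv_norm_smul_smul_of_pos hc]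

lemma norm_fderiv_Gfun_sub_le {x y : E2} (hx : x ≠ 0) (hy : y ≠ 0) :
    ‖fderiv ℝ Gfun x - fderiv ℝ Gfun y‖ ≤ 2 * ‖x - y‖ / ‖x‖ := by
  have hsqrt : (√2)⁻¹ ≤ 1 := inv_le_one_of_one_le₀ (Real.one_le_sqrt.2 one_le_two)
  rw [fderiv_Gfun hx, fderiv_Gfun hy, ← smul_sub, ← map_sub, norm_smul, innerSL_apply_norm,
    Real.norm_of_nonneg (by positivity)]
  calc (√2)⁻¹ * ‖‖x‖⁻¹ • x - ‖y‖⁻¹ • y‖ ≤ 1 * (2 * ‖x - y‖ / ‖x‖) := by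
        gcongr
        exact norm_inv_norm_smul_sub_le hx hy
    _ = 2 * ‖x - y‖ / ‖x‖ := one_mul _

lemma mem_Ann_iff {x : E2} : x ∈ Ann ↔ 1/2 ≤ ‖x‖ ∧ ‖x‖ ≤ 1 := by
  simp [Ann, and_comm]

lemma ne_zero_of_mem_Ann {x : E2} (hx : x ∈ Ann) : x ≠ 0 := by
  rintro rfl
  norm_num [mem_Ann_iff] at hx

lemma inv_norm_smul_mem_Ann {x : E2} (hx : x ≠ 0) : ‖x‖⁻¹ • x ∈ Ann := by
  rw [mem_Ann_iff, norm_inv_norm_smul hx]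
  norm_num

lemma exists_closedBall_subset_Ann {x : E2} (hx : x ∈ Ann) {h : ℝ} (h0 : 0 < h) (h1 : h ≤ 1/4) :
    ∃ y, ‖x - y‖ ≤ h ∧ closedBall y h ⊆ Ann := by
  obtain ⟨hx1, hx2⟩ := mem_Ann_iff.1 hx
  set u := ‖x‖⁻¹ • x
  have hu : ‖u‖ = 1 := norm_inv_norm_smul (ne_zero_of_mem_Ann hx)
  have hxu : x = ‖x‖ • u := by
    rw [smul_smul, mul_inv_cancel₀ (norm_ne_zero_iff.2 (ne_zero_of_mem_Ann hx)), one_smul]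
  set s := max (1/2 + h) (min (1 - h) ‖x‖)
  have hs1 : 1/2 + h ≤ s := le_max_left _ _
  have hs2 : s ≤ 1 - h := max_le (by linarith) (min_le_left _ _)
  have hxs : |‖x‖ - s| ≤ h := by
    rw [abs_sub_le_iff]
    constructor
    · rcases min_choice (1 - h) ‖x‖ with hm | hm <;>
        linarith [le_max_right (1/2 + h) (min (1 - h) ‖x‖)]
    · exact sub_le_iff_le_add.2 (max_le (by linarith) ((min_le_right _ _).trans (by linarith)))
  refine ⟨s • u, ?_, fun z hz => ?_⟩
  · nth_rewrite 1 [hxu]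
    rwa [← sub_smul, norm_smul, hu, mul_one, Real.norm_eq_abs]
  · have hsu : ‖s • u‖ = s := by rw [norm_smul, hu, mul_one, Real.norm_of_nonneg (by linarith)]
    rw [mem_closedBall, dist_eq_norm] at hz
    rw [mem_Ann_iff]
    constructor
    · linarith [norm_sub_norm_le (s • u) z, norm_sub_rev (s • u) z]
    · linarith [norm_le_insert' z (s • u)]

lemma le_two_mul_rpow {d α : ℝ} (hd0 : 0 ≤ d) (hd2 : d ≤ 2) (hα0 : 0 ≤ α) (hα1 : α ≤ 1) :
    d ≤ 2 * d ^ α := by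
  have h : d / 2 ≤ (d / 2) ^ α :=
    Real.self_le_rpow_of_le_one (by positivity) (by linarith) hα1
  rw [Real.div_rpow hd0 zero_le_two] at h
  have h2 : 1 ≤ (2 : ℝ) ^ α := Real.one_le_rpow one_le_two hα0
  have : d ^ α / 2 ^ α ≤ d ^ α := div_le_self (by positivity) h2
  linarith

lemma norm_fderiv_Gfun_sub_le_rpow {α : ℝ} (hα0 : 0 ≤ α) (hα1 : α ≤ 1) {x y : E2}
    (hx : x ∈ Ann) (hy : y ∈ Ann) :
    ‖fderiv ℝ Gfun x - fderiv ℝ Gfun y‖ ≤ 8 * ‖x - y‖ ^ α := by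
  obtain ⟨hx1, hx2⟩ := mem_Ann_iff.1 hx
  obtain ⟨hy1, hy2⟩ := mem_Ann_iff.1 hy
  have hxy : ‖x - y‖ ≤ 2 := (norm_sub_le x y).trans (by linarith)
  calc ‖fderiv ℝ Gfun x - fderiv ℝ Gfun y‖ ≤ 2 * ‖x - y‖ / ‖x‖ :=
        norm_fderiv_Gfun_sub_le (ne_zero_of_mem_Ann hx) (ne_zero_of_mem_Ann hy)
    _ ≤ 4 * ‖x - y‖ := by
        rw [div_le_iff₀ (by linarith)]
        nlinarith [norm_nonneg (x - y)]
    _ ≤ 8 * ‖x - y‖ ^ α := by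
        linarith [le_two_mul_rpow (norm_nonneg _) hxy hα0 hα1]

lemma hasFDerivAt_resc {g : E2 → ℝ} {r : ℝ} (hr : r ≠ 0) {x : E2}
    (hg : DifferentiableAt ℝ g (r • x)) : HasFDerivAt (resc g r) (fderiv ℝ g (r • x)) x := by
  have h := (hg.hasFDerivAt.comp x ((hasFDerivAt_id x).const_smul r)).mul_const r⁻¹
  rw [show resc g r = fun y => g (r • y) * r⁻¹ from funext fun y => div_eq_mul_inv _ _]
  refine h.congr_fderiv ?_
  ext v
  simp [hr]

lemma resc_norm_inv_norm_smul (g : E2 → ℝ) (x : E2) : resc g ‖x‖ (‖x‖⁻¹ • x) = g x / ‖x‖ := by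
  by_cases hx : x = 0
  · simp [resc, hx]
  · rw [resc, smul_inv_smul₀ (norm_ne_zero_iff.2 hx)]

lemma fderiv_resc_norm_inv_norm_smul {g : E2 → ℝ} {x : E2} (hx : x ≠ 0)
    (hg : DifferentiableAt ℝ g x) : fderiv ℝ (resc g ‖x‖) (‖x‖⁻¹ • x) = fderiv ℝ g x := by
  have hx' : ‖x‖ ≠ 0 := norm_ne_zero_iff.2 hx
  rw [← smul_inv_smul₀ hx' x] at hg
  rw [(hasFDerivAt_resc hx' hg).fderiv, smul_inv_smul₀ hx']

section Interpolation

variable {E : Type*} [NormedAddCommGroup E] [NormedSpace ℝ E]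

lemma norm_fderiv_le_of_abs_le_on_closedBall {f : E → ℝ} {f' : E → StrongDual ℝ E} {y : E}
    {h δ η : ℝ} (hh : 0 < h)
    (hf : ∀ z ∈ closedBall y h, HasFDerivWithinAt f (f' z) (closedBall y h) z)
    (hfδ : ∀ z ∈ closedBall y h, |f z| ≤ δ) (hf'η : ∀ z ∈ closedBall y h, ‖f' z - f' y‖ ≤ η) :
    ‖f' y‖ ≤ (2 * δ + η * h) / h := by
  refine (f' y).opNorm_bound_of_ball_bound hh _ fun v hv => ?_
  have hv' : ‖v‖ ≤ h := by simpa using hv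
  have hyv : y + v ∈ closedBall y h := by simpa using hv'
  have hmvt := (convex_closedBall y h).norm_image_sub_le_of_norm_hasFDerivWithin_le' hf hf'η
    (mem_closedBall_self hh.le) hyv
  rw [add_sub_cancel_left] at hmvt
  have hη : 0 ≤ η := (norm_nonneg _).trans (hf'η y (mem_closedBall_self hh.le))
  calc ‖f' y v‖ ≤ ‖f (y + v) - f y‖ + ‖f (y + v) - f y - f' y v‖ := by
        simpa using norm_sub_le (f (y + v) - f y) (f (y + v) - f y - f' y v)
    _ ≤ (|f (y + v)| + |f y|) + η * h := by
        gcongr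
        · exact abs_sub _ _
        · exact hmvt.trans (by gcongr)
    _ ≤ 2 * δ + η * h := by
        linarith [hfδ _ hyv, hfδ y (mem_closedBall_self hh.le)]

end Interpolation

lemma exists_mem_Ioc_mul_rpow_lt (M : ℝ) {α b c : ℝ} (hα : 0 < α) (hb : 0 < b) (hc : 0 < c) :
    ∃ h ∈ Set.Ioc 0 b, M * h ^ α < c := by
  have hlim : Tendsto (fun h : ℝ => M * h ^ α) (𝓝[>] 0) (𝓝 0) := by
    have := (((Real.continuous_rpow_const hα.le).tendsto 0).const_mul M).mono_left
      (nhdsWithin_le_nhds (s := Set.Ioi 0))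
    rwa [Real.zero_rpow hα.ne', mul_zero] at this
  exact ((hlim.eventually (gt_mem_nhds hc)).and (Ioc_mem_nhdsGT hb)).exists.imp
    fun h hh => ⟨hh.2, hh.1⟩

lemma norm_fderiv_le_of_abs_le_on_Ann {f : E2 → ℝ} {f' : E2 → StrongDual ℝ E2} {δ M α h : ℝ}
    (hM : 0 ≤ M) (hα : 0 ≤ α) (h0 : 0 < h) (h1 : h ≤ 1/4)
    (hf : ∀ z ∈ Ann, HasFDerivAt f (f' z) z)
    (hf' : ∀ z ∈ Ann, ∀ z' ∈ Ann, ‖f' z - f' z'‖ ≤ M * ‖z - z'‖ ^ α)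
    (hfδ : ∀ z ∈ Ann, |f z| ≤ δ) {x : E2} (hx : x ∈ Ann) :
    ‖f' x‖ ≤ 2 * δ / h + 2 * (M * h ^ α) := by
  obtain ⟨y, hxy, hball⟩ := exists_closedBall_subset_Ann hx h0 h1
  have hy : y ∈ Ann := hball (mem_closedBall_self h0.le)
  have hclose : ∀ z ∈ closedBall y h, ‖f' z - f' y‖ ≤ M * h ^ α := fun z hz =>
    (hf' z (hball hz) y hy).trans (by gcongr; exact mem_closedBall_iff_norm.1 hz)
  have hfy : ‖f' y‖ ≤ (2 * δ + M * h ^ α * h) / h :=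
    norm_fderiv_le_of_abs_le_on_closedBall h0 (fun z hz => (hf z (hball hz)).hasFDerivWithinAt)
      (fun z hz => hfδ z (hball hz)) hclose
  calc ‖f' x‖ ≤ ‖f' y‖ + ‖f' x - f' y‖ := norm_le_norm_add_norm_sub' _ _
    _ ≤ (2 * δ + M * h ^ α * h) / h + M * h ^ α :=
        add_le_add hfy ((hf' x hx y hy).trans (by gcongr))
    _ = 2 * δ / h + 2 * (M * h ^ α) := by field_simp; ring

lemma exists_pos_abs_le_on_Ann_imp_norm_fderiv_le {M α ε : ℝ} (hM : 0 ≤ M) (hα : 0 < α)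
    (hε : 0 < ε) :
    ∃ δ > 0, ∀ (f : E2 → ℝ) (f' : E2 → StrongDual ℝ E2),
      (∀ z ∈ Ann, HasFDerivAt f (f' z) z) →
      (∀ z ∈ Ann, ∀ z' ∈ Ann, ‖f' z - f' z'‖ ≤ M * ‖z - z'‖ ^ α) →
      (∀ z ∈ Ann, |f z| ≤ δ) → ∀ x ∈ Ann, ‖f' x‖ ≤ ε := by
  obtain ⟨h, ⟨h0, h1⟩, hMh⟩ := exists_mem_Ioc_mul_rpow_lt M hα (by norm_num : (0:ℝ) < 1/4)
    (by positivity : 0 < ε / 4)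
  refine ⟨ε * h / 4, by positivity, fun f f' hf hf' hfδ x hx => ?_⟩
  calc ‖f' x‖ ≤ 2 * (ε * h / 4) / h + 2 * (M * h ^ α) :=
        norm_fderiv_le_of_abs_le_on_Ann hM hα.le h0 h1 hf hf' hfδ hx
    _ ≤ ε := by
        rw [show 2 * (ε * h / 4) / h = ε / 2 by field_simp; ring]
        linarith

lemma exists_pos_forall_le_imp_le_rpow {M α β ε : ℝ} (hM : 0 ≤ M) (hβ : 0 < β) (hβα : β < α)
    (hε : 0 < ε) : ∃ ε₀ > 0, ∀ d q : ℝ, 0 ≤ d → q ≤ M * d ^ α → q ≤ ε₀ → q ≤ ε * d ^ β := by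
  obtain ⟨t, ⟨ht0, -⟩, hMt⟩ := exists_mem_Ioc_mul_rpow_lt M (sub_pos.2 hβα) one_pos hε
  refine ⟨ε * t ^ β, by positivity, fun d q hd hqM hqε => ?_⟩
  rcases le_or_gt d t with hdt | htd
  · calc q ≤ M * d ^ α := hqM
      _ = M * d ^ (α - β) * d ^ β := by
          rw [mul_assoc, ← Real.rpow_add' hd (by linarith), sub_add_cancel]
      _ ≤ ε * d ^ β := by
          gcongr
          exact (mul_le_mul_of_nonneg_left
            (Real.rpow_le_rpow hd hdt (sub_pos.2 hβα).le) hM).trans hMt.le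
  · exact hqε.trans (by gcongr)

section Lipschitz

variable {E F : Type*} [NormedAddCommGroup E] [NormedSpace ℝ E]
  [NormedAddCommGroup F] [NormedSpace ℝ F]

lemma norm_add_norm_eq_of_zero_mem_segment {x y : E} (h : (0 : E) ∈ segment ℝ x y) :
    ‖x‖ + ‖y‖ = ‖x - y‖ := by
  have hray := (mem_segment_iff_sameRay.1 h).norm_add
  rw [zero_sub, sub_zero, norm_neg, neg_add_eq_sub, norm_sub_rev] at hray
  exact hray.symm

lemma lipschitzOnWith_ball_of_norm_fderiv_le {g : E → F} {r : ℝ} {L : NNReal}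
    (hg : ∀ x ∈ ball (0 : E) r, ‖g x‖ ≤ L * ‖x‖)
    (hdiff : ∀ x ∈ ball (0 : E) r \ {0}, DifferentiableAt ℝ g x)
    (hder : ∀ x ∈ ball (0 : E) r \ {0}, ‖fderiv ℝ g x‖ ≤ L) :
    LipschitzOnWith L g (ball 0 r) := by
  refine LipschitzOnWith.of_dist_le_mul fun x hx y hy => ?_
  rw [dist_eq_norm, dist_eq_norm]
  by_cases h0 : (0 : E) ∈ segment ℝ x y
  · calc ‖g x - g y‖ ≤ ‖g x‖ + ‖g y‖ := norm_sub_le _ _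
      _ ≤ L * ‖x‖ + L * ‖y‖ := add_le_add (hg x hx) (hg y hy)
      _ = L * ‖x - y‖ := by rw [← mul_add, norm_add_norm_eq_of_zero_mem_segment h0]
  · have hseg : segment ℝ x y ⊆ ball 0 r \ {0} := fun z hz =>
      ⟨(convex_ball 0 r).segment_subset hx hy hz, fun hz0 => h0 (hz0 ▸ hz)⟩
    rw [norm_sub_rev (g x), norm_sub_rev x]
    exact (convex_segment x y).norm_image_sub_le_of_norm_fderiv_le
      (fun z hz => hdiff z (hseg hz)) (fun z hz => hder z (hseg hz))
      (left_mem_segment ℝ x y) (right_mem_segment ℝ x y)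

end Lipschitz

lemma smul_mem_ball_diff_zero {r r₀ : ℝ} (hr : 0 < r) (hrr₀ : r < r₀) {z : E2} (hz : z ∈ Ann) :
    r • z ∈ ball (0 : E2) r₀ \ {0} := by
  obtain ⟨-, hz1⟩ := mem_Ann_iff.1 hz
  refine ⟨?_, smul_ne_zero hr.ne' (ne_zero_of_mem_Ann hz)⟩
  rw [mem_ball_zero_iff, norm_smul, Real.norm_of_nonneg hr.le]
  nlinarith

lemma norm_sub_fderiv_Gfun_sub_le_of_le {A : E2 → StrongDual ℝ E2} {α L : ℝ}
    (hα0 : 0 ≤ α) (hα1 : α ≤ 1) {x y : E2} (hx : x ∈ Ann) (hy : y ∈ Ann)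
    (hA : ‖A x - A y‖ ≤ L * ‖x - y‖ ^ α) :
    ‖(A x - fderiv ℝ Gfun x) - (A y - fderiv ℝ Gfun y)‖ ≤ (L + 8) * ‖x - y‖ ^ α :=
  calc ‖(A x - fderiv ℝ Gfun x) - (A y - fderiv ℝ Gfun y)‖
      = ‖(A x - A y) - (fderiv ℝ Gfun x - fderiv ℝ Gfun y)‖ := by congr 1; abel
    _ ≤ L * ‖x - y‖ ^ α + 8 * ‖x - y‖ ^ α :=
        (norm_sub_le _ _).trans (add_le_add hA (norm_fderiv_Gfun_sub_le_rpow hα0 hα1 hx hy))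
    _ = (L + 8) * ‖x - y‖ ^ α := by ring

section Rescaling

variable {g : E2 → ℝ} {r₀ L : ℝ}

lemma abs_le_mul_norm_of_abs_resc_le (hg0 : g 0 = 0)
    (hL : ∀ r : ℝ, 0 < r → r ≤ r₀ → ∀ x ∈ Ann, |resc g r x| ≤ L) :
    ∀ x ∈ ball (0 : E2) r₀, |g x| ≤ L * ‖x‖ := by
  intro x hx
  rcases eq_or_ne x 0 with rfl | hx0
  · simp [hg0]
  have hnx : 0 < ‖x‖ := norm_pos_iff.2 hx0
  have := hL ‖x‖ hnx (mem_ball_zero_iff.1 hx).le _ (inv_norm_smul_mem_Ann hx0)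
  rwa [resc_norm_inv_norm_smul, abs_div, abs_norm, div_le_iff₀ hnx] at this

lemma norm_fderiv_le_of_norm_fderiv_resc_le
    (hdiff : ∀ x ∈ ball (0 : E2) r₀ \ {0}, DifferentiableAt ℝ g x)
    (hL : ∀ r : ℝ, 0 < r → r ≤ r₀ → ∀ x ∈ Ann, ‖fderiv ℝ (resc g r) x‖ ≤ L) :
    ∀ x ∈ ball (0 : E2) r₀ \ {0}, ‖fderiv ℝ g x‖ ≤ L := by
  rintro x ⟨hx, hx0⟩
  rw [← fderiv_resc_norm_inv_norm_smul hx0 (hdiff x ⟨hx, hx0⟩)]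
  exact hL ‖x‖ (norm_pos_iff.2 hx0) (mem_ball_zero_iff.1 hx).le _ (inv_norm_smul_mem_Ann hx0)

lemma exists_forall_norm_fderiv_resc_sub_le {α : ℝ} (hr₀ : 0 < r₀) (hα0 : 0 < α) (hα1 : α ≤ 1)
    (hL0 : 0 ≤ L) (hdiff : ∀ x ∈ ball (0 : E2) r₀ \ {0}, DifferentiableAt ℝ g x)
    (hHolder : ∀ r : ℝ, 0 < r → r ≤ r₀ → ∀ x ∈ Ann, ∀ y ∈ Ann,
      ‖fderiv ℝ (resc g r) x - fderiv ℝ (resc g r) y‖ ≤ L * ‖x - y‖ ^ α)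
    (hconv : ∀ ε > 0, ∃ ρ > 0, ∀ r : ℝ, 0 < r → r < ρ →
      ∀ x ∈ Ann, |resc g r x - Gfun x| ≤ ε) :
    ∀ ε > 0, ∃ ρ > 0, ∀ r : ℝ, 0 < r → r < ρ →
      ∀ x ∈ Ann, ‖fderiv ℝ (resc g r) x - fderiv ℝ Gfun x‖ ≤ ε := by
  intro ε hε
  obtain ⟨δ, hδ, hinterp⟩ :=
    exists_pos_abs_le_on_Ann_imp_norm_fderiv_le (M := L + 8) (by linarith) hα0 hε
  obtain ⟨ρ, hρ, hρconv⟩ := hconv δ hδ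
  refine ⟨min ρ r₀, lt_min hρ hr₀, fun r hr hrρ => ?_⟩
  have hrr₀ : r < r₀ := hrρ.trans_le (min_le_right _ _)
  refine hinterp _ _ (fun z hz => ?_)
    (fun z hz z' hz' => norm_sub_fderiv_Gfun_sub_le_of_le hα0.le hα1 hz hz'
      (hHolder r hr hrr₀.le z hz z' hz'))
    (hρconv r hr (hrρ.trans_le (min_le_left _ _)))
  have hresc := hasFDerivAt_resc hr.ne' (hdiff _ (smul_mem_ball_diff_zero hr hrr₀ hz))
  exact hresc.differentiableAt.hasFDerivAt.sub
    (hasFDerivAt_Gfun (ne_zero_of_mem_Ann hz)).differentiableAt.hasFDerivAt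

lemma exists_forall_holder_fderiv_resc_sub_le {α β : ℝ} (hr₀ : 0 < r₀) (hα0 : 0 ≤ α)
    (hα1 : α ≤ 1) (hβ : 0 < β) (hβα : β < α) (hL0 : 0 ≤ L)
    (hHolder : ∀ r : ℝ, 0 < r → r ≤ r₀ → ∀ x ∈ Ann, ∀ y ∈ Ann,
      ‖fderiv ℝ (resc g r) x - fderiv ℝ (resc g r) y‖ ≤ L * ‖x - y‖ ^ α)
    (hgrad : ∀ ε > 0, ∃ ρ > 0, ∀ r : ℝ, 0 < r → r < ρ →
      ∀ x ∈ Ann, ‖fderiv ℝ (resc g r) x - fderiv ℝ Gfun x‖ ≤ ε) :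
    ∀ ε > 0, ∃ ρ > 0, ∀ r : ℝ, 0 < r → r < ρ → ∀ x ∈ Ann, ∀ y ∈ Ann,
      ‖(fderiv ℝ (resc g r) x - fderiv ℝ Gfun x) -
        (fderiv ℝ (resc g r) y - fderiv ℝ Gfun y)‖ ≤ ε * ‖x - y‖ ^ β := by
  intro ε hε
  obtain ⟨ε₀, hε₀, hinterp⟩ :=
    exists_pos_forall_le_imp_le_rpow (M := L + 8) (by linarith) hβ hβα hε
  obtain ⟨ρ, hρ, hρgrad⟩ := hgrad (ε₀ / 2) (by positivity)
  refine ⟨min ρ r₀, lt_min hρ hr₀, fun r hr hrρ x hx y hy => ?_⟩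
  have hsmall := hρgrad r hr (hrρ.trans_le (min_le_left _ _))
  refine hinterp _ _ (norm_nonneg _)
    (norm_sub_fderiv_Gfun_sub_le_of_le hα0 hα1 hx hy
      (hHolder r hr ((hrρ.trans_le (min_le_right _ _)).le) x hx y hy)) ?_
  linarith [norm_sub_le (fderiv ℝ (resc g r) x - fderiv ℝ Gfun x)
    (fderiv ℝ (resc g r) y - fderiv ℝ Gfun y), hsmall x hx, hsmall y hy]

end Rescaling

/-- If `g(0)=0`, the rescalings `g_r` have uniformly bounded `C^{1,α}` norms on the
annulus, and `g_r → G` uniformly on the annulus, then `g` is Lipschitz on `D_{r₀}`,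
`g_r → G` in `C^{1,β}` on the annulus for every `β < α`, and `∇g − ∇G → 0` at the
origin. -/
theorem stmt19 (g : E2 → ℝ) (r₀ α : ℝ) (hr₀ : 0 < r₀) (hα : α ∈ Set.Ioo (0 : ℝ) 1)
    (hg0 : g 0 = 0)
    (hdiff : ∀ x ∈ ball (0 : E2) r₀ \ {0}, DifferentiableAt ℝ g x)
    (hbound : ∃ L : ℝ, ∀ r : ℝ, 0 < r → r ≤ r₀ →
      (∀ x ∈ Ann, |resc g r x| ≤ L ∧ ‖fderiv ℝ (resc g r) x‖ ≤ L) ∧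
      (∀ x ∈ Ann, ∀ y ∈ Ann,
        ‖fderiv ℝ (resc g r) x - fderiv ℝ (resc g r) y‖ ≤ L * ‖x - y‖ ^ α))
    (hconv : ∀ ε > 0, ∃ ρ > 0, ∀ r : ℝ, 0 < r → r < ρ →
      ∀ x ∈ Ann, |resc g r x - Gfun x| ≤ ε) :
    (∃ K : NNReal, LipschitzOnWith K g (ball (0 : E2) r₀)) ∧
    (∀ β : ℝ, 0 < β → β < α → ∀ ε > 0, ∃ ρ > 0, ∀ r : ℝ, 0 < r → r < ρ →
      (∀ x ∈ Ann, |resc g r x - Gfun x| ≤ ε ∧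
        ‖fderiv ℝ (resc g r) x - fderiv ℝ Gfun x‖ ≤ ε) ∧
      (∀ x ∈ Ann, ∀ y ∈ Ann,
        ‖(fderiv ℝ (resc g r) x - fderiv ℝ Gfun x) -
          (fderiv ℝ (resc g r) y - fderiv ℝ Gfun y)‖ ≤ ε * ‖x - y‖ ^ β)) ∧
    (∀ ε > 0, ∃ ρ > 0, ∀ x : E2, x ≠ 0 → ‖x‖ < ρ → ‖x‖ < r₀ →
      ‖fderiv ℝ g x - fderiv ℝ Gfun x‖ ≤ ε) := by
  obtain ⟨L, hL⟩ := hbound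
  obtain ⟨hα0, hα1⟩ := hα
  have hL0 : 0 ≤ L := (abs_nonneg _).trans
    ((hL r₀ hr₀ le_rfl).1 (EuclideanSpace.single 0 1) (by norm_num [mem_Ann_iff])).1
  have hgrad := exists_forall_norm_fderiv_resc_sub_le hr₀ hα0 hα1.le hL0 hdiff
    (fun r hr hrr₀ => (hL r hr hrr₀).2) hconv
  refine ⟨⟨L.toNNReal, lipschitzOnWith_ball_of_norm_fderiv_le ?_ hdiff ?_⟩,
    fun β hβ hβα ε hε => ?_, fun ε hε => ?_⟩
  · simpa [Real.coe_toNNReal L hL0] using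
      abs_le_mul_norm_of_abs_resc_le hg0 fun r hr hrr₀ x hx => ((hL r hr hrr₀).1 x hx).1
  · simpa [Real.coe_toNNReal L hL0] using
      norm_fderiv_le_of_norm_fderiv_resc_le hdiff fun r hr hrr₀ x hx => ((hL r hr hrr₀).1 x hx).2
  · obtain ⟨ρ₁, hρ₁, hconv₁⟩ := hconv ε hε
    obtain ⟨ρ₂, hρ₂, hgrad₂⟩ := hgrad ε hε
    obtain ⟨ρ₃, hρ₃, hholder₃⟩ := exists_forall_holder_fderiv_resc_sub_le hr₀ hα0.le hα1.le hβ hβα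
      hL0 (fun r hr hrr₀ => (hL r hr hrr₀).2) hgrad ε hε
    refine ⟨min ρ₁ (min ρ₂ ρ₃), lt_min hρ₁ (lt_min hρ₂ hρ₃), fun r hr hrρ => ?_⟩
    simp only [lt_min_iff] at hrρ
    exact ⟨fun x hx => ⟨hconv₁ r hr hrρ.1 x hx, hgrad₂ r hr hrρ.2.1 x hx⟩, hholder₃ r hr hrρ.2.2⟩
  · obtain ⟨ρ, hρ, hρgrad⟩ := hgrad ε hε
    refine ⟨ρ, hρ, fun x hx0 hxρ hxr₀ => ?_⟩
    have hnx : 0 < ‖x‖ := norm_pos_iff.2 hx0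
    rw [← fderiv_resc_norm_inv_norm_smul hx0 (hdiff x ⟨mem_ball_zero_iff.2 hxr₀, hx0⟩),
      ← fderiv_Gfun_smul (inv_pos.2 hnx) hx0]
    exact hρgrad ‖x‖ hnx hxρ _ (inv_norm_smul_mem_Ann hx0)

end
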